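/- Let 𝒜 denote the set of all product probability measures μ = ⊗_{i=1}^m μ_i on Ω_1 × ⋯ × Ω_m such that each μ_i is a probability measure on Ω_i satisfying μ_i(X_{i,j}) = M_{i,j} for every j = 1,…,K. For each i let C_i be a measurable subset of Ω_i, and let C = C_1 × ⋯ × C_m. Then sup_{μ∈𝒜} μ(C) = Π_{i=1}^m Σ_{j=1}^K M_{i,j} · 1[C_i ∩ X_{i,j} ≠ ∅], where 1[·] denotes the indicator of the stated condition. -/

import Mathlib

open MeasureTheory
open scoped Classical ENNReal

/-! Since the cells `X i j` cover `Ω i`, the set `C i` lies in the union of the cells it meets, so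
`μ i (C i)` is at most the total mass of those cells; for a product measure the bound multiplies
over `i`. It is attained by the measure on `Ω i` putting mass `M i j` at one point of each cell
`X i j`, taken in `C i` whenever the cell meets `C i`. -/

lemma Set.Nonempty.exists_mem_and_mem_iff_inter_nonempty {α : Type*} {s t : Set α}
    (ht : t.Nonempty) : ∃ y ∈ t, (y ∈ s ↔ (s ∩ t).Nonempty) := by
  by_cases h : (s ∩ t).Nonempty
  · obtain ⟨y, hys, hyt⟩ := h
    exact ⟨y, hyt, iff_of_true hys ⟨y, hys, hyt⟩⟩
  · obtain ⟨y, hyt⟩ := ht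
    exact ⟨y, hyt, iff_of_false (fun hys => h ⟨y, hys, hyt⟩) h⟩

section

variable {α ι : Type*} [MeasurableSpace α] [Fintype ι]

lemma measure_le_sum_measure_of_inter_nonempty (μ : Measure α) {X : ι → Set α}
    (hX : ⋃ j, X j = Set.univ) (s : Set α) :
    μ s ≤ ∑ j, if (s ∩ X j).Nonempty then μ (X j) else 0 := by
  calc μ s = μ (⋃ j, s ∩ X j) := by rw [← Set.inter_iUnion, hX, Set.inter_univ]
    _ ≤ ∑ j, μ (s ∩ X j) := measure_iUnion_fintype_le μ _
    _ ≤ _ := by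
      gcongr with j
      split_ifs with h
      · exact measure_mono Set.inter_subset_right
      · rw [Set.not_nonempty_iff_eq_empty.mp h, measure_empty]

lemma sum_smul_dirac_apply [MeasurableSingletonClass α] (w : ι → ℝ≥0∞) (x : ι → α)
    (s : Set α) : (∑ j, w j • Measure.dirac (x j)) s = ∑ j, if x j ∈ s then w j else 0 := by
  simp [Measure.finsetSum_apply, Measure.dirac_apply, Set.indicator_apply]

lemma exists_isProbabilityMeasure_measure_eq_sum_of_inter_nonempty
    [MeasurableSingletonClass α] {X : ι → Set α} (hXne : ∀ j, (X j).Nonempty)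
    (hXdisj : Pairwise (Function.onFun Disjoint X)) (w : ι → ℝ≥0∞) (hw : ∑ j, w j = 1)
    (s : Set α) :
    ∃ ν : Measure α, IsProbabilityMeasure ν ∧ (∀ j, ν (X j) = w j) ∧
      ν s = ∑ j, if (s ∩ X j).Nonempty then w j else 0 := by
  choose x hxX hxs using fun j => (hXne j).exists_mem_and_mem_iff_inter_nonempty (s := s)
  have hx_mem_iff : ∀ j k, x k ∈ X j ↔ k = j := fun j k =>
    ⟨fun h => by_contra fun hkj => Set.disjoint_left.mp (hXdisj hkj) (hxX k) h,
      fun h => h ▸ hxX k⟩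
  refine ⟨∑ j, w j • Measure.dirac (x j), ⟨?_⟩, fun j => ?_, ?_⟩
  · simpa [sum_smul_dirac_apply] using hw
  · simp [sum_smul_dirac_apply, hx_mem_iff]
  · simp only [sum_smul_dirac_apply, hxs]

end

theorem sup_failure_probability_product_general
    (m K : ℕ)
    (Ω : Fin m → Type*) [∀ i, MeasurableSpace (Ω i)]
    [∀ i, MeasurableSingletonClass (Ω i)]
    (X : ∀ i, Fin K → Set (Ω i))
    (hXne : ∀ i j, (X i j).Nonempty)
    (hXdisj : ∀ i, Pairwise (Function.onFun Disjoint (X i)))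
    (hXcover : ∀ i, (⋃ j, X i j) = Set.univ)
    (M : Fin m → Fin K → ℝ)
    (hM0 : ∀ i j, 0 ≤ M i j) (hM1 : ∀ i, ∑ j, M i j = 1)
    (C : ∀ i, Set (Ω i)) :
    (⨆ μ ∈ {μ : Measure (∀ i, Ω i) | ∃ ν : ∀ i, Measure (Ω i),
        (∀ i, IsProbabilityMeasure (ν i)) ∧
        (∀ i j, ν i (X i j) = ENNReal.ofReal (M i j)) ∧
        μ = Measure.pi ν}, μ (Set.pi Set.univ C))
      = ∏ i, ∑ j, if (C i ∩ X i j).Nonempty then ENNReal.ofReal (M i j) else 0 := by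
  apply le_antisymm
  · refine iSup₂_le ?_
    rintro _ ⟨ν, hνprob, hνX, rfl⟩
    rw [Measure.pi_pi]
    gcongr with i
    simpa only [hνX] using measure_le_sum_measure_of_inter_nonempty (ν i) (hXcover i) (C i)
  · have hw : ∀ i, ∑ j, ENNReal.ofReal (M i j) = 1 := fun i => by
      rw [← ENNReal.ofReal_sum_of_nonneg fun j _ => hM0 i j, hM1 i, ENNReal.ofReal_one]
    choose ν hνprob hνX hνC using fun i =>
      exists_isProbabilityMeasure_measure_eq_sum_of_inter_nonempty (hXne i) (hXdisj i) _ (hw i)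
        (C i)
    refine le_iSup₂_of_le (Measure.pi ν) ⟨ν, hνprob, hνX, rfl⟩ ?_
    rw [Measure.pi_pi]
    exact (Finset.prod_congr rfl fun i _ => hνC i).ge

/-- Optimal upper bound on the failure probability for a product of
independent inputs, each constrained by zeroth-order moments on subdomains:
the supremum of `μ (C₁ × ⋯ × С_m)` over all admissible product measures
equals the product over `i` of the sums of the masses of the subdomains
intersecting `C i`. -/
theorem sup_failure_probability_product
    (m K : ℕ) (hm : 0 < m) (hK : 0 < K)
    (Ω : Fin m → Type*) [∀ i, MeasurableSpace (Ω i)]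
    [∀ i, MeasurableSingletonClass (Ω i)]
    (X : ∀ i, Fin K → Set (Ω i))
    (hXne : ∀ i j, (X i j).Nonempty)
    (hXmeas : ∀ i j, MeasurableSet (X i j))
    (hXdisj : ∀ i, Pairwise (Function.onFun Disjoint (X i)))
    (hXcover : ∀ i, (⋃ j, X i j) = Set.univ)
    (M : Fin m → Fin K → ℝ)
    (hM0 : ∀ i j, 0 ≤ M i j) (hM1 : ∀ i, ∑ j, M i j = 1)
    (C : ∀ i, Set (Ω i)) (hC : ∀ i, MeasurableSet (C i)) :
    (⨆ μ ∈ {μ : Measure (∀ i, Ω i) | ∃ ν : ∀ i, Measure (Ω i),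
        (∀ i, IsProbabilityMeasure (ν i)) ∧
        (∀ i j, ν i (X i j) = ENNReal.ofReal (M i j)) ∧
        μ = Measure.pi ν}, μ (Set.pi Set.univ C))
      = ∏ i, ∑ j, if (C i ∩ X i j).Nonempty then ENNReal.ofReal (M i j) else 0 :=
  sup_failure_probability_product_general m K Ω X hXne hXdisj hXcover M hM0 hM1 C
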